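/- arXiv:2410.01910 — 3 statements merged into one kernel-verified Lean document; each statement's English description precedes it below -/
import Mathlib

section
/- Let f : ℝ → ℝ be a Pfaffian function. If f is not constant, then its zero set {x ∈ ℝ : f(x) = 0} is finite. -/
/-- A Pfaffian chain on ℝ: a finite sequence of real-analytic functions
`f 0, …, f (r-1) : ℝ → ℝ` such that for each `i` there is a real polynomial `P i`
in `1 + (i+1)` variables with `(f i)′ x = P i (x, f 0 x, …, f i x)` for all `x`. -/
def IsPfaffianChain {r : ℕ} (f : Fin r → ℝ → ℝ) : Prop :=
  (∀ i : Fin r, ∀ x : ℝ, AnalyticAt ℝ (f i) x) ∧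
  ∀ i : Fin r, ∃ P : MvPolynomial (Fin (i.val + 2)) ℝ,
    ∀ x : ℝ,
      deriv (f i) x =
        MvPolynomial.eval
          (Fin.cons x (fun j : Fin (i.val + 1) => f (Fin.castLE i.isLt j) x)) P

/-- A function `g : ℝ → ℝ` is Pfaffian if there is a Pfaffian chain `f 0, …, f (r-1)`
and a real polynomial `Q` in `1 + r` variables such that
`g x = Q (x, f 0 x, …, f (r-1) x)` for all `x`. -/
def IsPfaffian (g : ℝ → ℝ) : Prop :=
  ∃ (r : ℕ) (f : Fin r → ℝ → ℝ), IsPfaffianChain f ∧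
    ∃ Q : MvPolynomial (Fin (r + 1)) ℝ,
      ∀ x : ℝ, g x = MvPolynomial.eval (Fin.cons x (fun j : Fin r => f j x)) Q

/-!
Khovanskii's argument. Call a subalgebra of real analytic functions on `ℝ` *Khovanskii* if it is
closed under differentiation and its nonzero elements have finitely many zeros. The constants form
one, and adjoining an analytic `φ` with `φ' ∈ S[φ]` to a Khovanskii algebra `S` gives another, so
by induction along the chain every Pfaffian function lies in a Khovanskii algebra.

For the adjunction step write `g = p(φ)` and pseudo-divide `g' = R(φ)` by `p`:
`a^k g' = A(φ) g + B(φ)` with `deg B < deg p`, where `a ∈ S` is the leading coefficient of `p`.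
If `g` had infinitely many zeros, then by Rolle's theorem `a^(2k) g'`, hence `a^k B(φ)`, would
change sign between consecutive zeros of `g`, so `B(φ)` has infinitely many zeros and vanishes by
induction on the degree. Then `g` solves the linear ODE `a^k g' = A(φ) g` and vanishes at a point
where `a ≠ 0`, so `g = 0` by Grönwall's inequality and analyticity.
-/

open Set Filter Topology Polynomial

theorem HasDerivAt.nonneg_of_eq_zero_of_nonneg_Ioo {h : ℝ → ℝ} {h' u v : ℝ}
    (hd : HasDerivAt h h' u) (hu : h u = 0) (huv : u < v) (hpos : ∀ x ∈ Ioo u v, 0 ≤ h x) :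
    0 ≤ h' := by
  refine ge_of_tendsto hd.tendsto_slope_zero_right ?_
  filter_upwards [Ioo_mem_nhdsGT (sub_pos.mpr huv)] with t ht
  rw [hu, sub_zero, smul_eq_mul]
  exact mul_nonneg (inv_nonneg.mpr ht.1.le) (hpos _ ⟨by linarith [ht.1], by linarith [ht.2]⟩)

theorem HasDerivAt.nonpos_of_eq_zero_of_nonneg_Ioo {h : ℝ → ℝ} {h' u v : ℝ}
    (hd : HasDerivAt h h' v) (hv : h v = 0) (huv : u < v) (hpos : ∀ x ∈ Ioo u v, 0 ≤ h x) :
    h' ≤ 0 := by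
  refine le_of_tendsto hd.tendsto_slope_zero_left ?_
  filter_upwards [Ioo_mem_nhdsLT (sub_neg.mpr huv)] with t ht
  rw [hv, sub_zero, smul_eq_mul]
  exact mul_nonpos_of_nonpos_of_nonneg (inv_nonpos.mpr ht.2.le)
    (hpos _ ⟨by linarith [ht.1], by linarith [ht.2]⟩)

theorem deriv_mul_deriv_nonpos_of_consecutive_zeros {g : ℝ → ℝ} (hg : Differentiable ℝ g)
    {u v : ℝ} (huv : u < v) (hu : g u = 0) (hv : g v = 0) (hne : ∀ x ∈ Ioo u v, g x ≠ 0) :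
    deriv g u * deriv g v ≤ 0 := by
  obtain ⟨w, hw⟩ := nonempty_Ioo.mpr huv
  have hcont : Continuous fun x => g x * g w := hg.continuous.mul continuous_const
  have hsign : ∀ x ∈ Ioo u v, 0 ≤ g x * g w := by
    intro x hx
    by_contra! hneg
    obtain ⟨y, hy, hy0⟩ := isPreconnected_Ioo.intermediate_value hx hw hcont.continuousOn
      ⟨hneg.le, mul_self_nonneg (g w)⟩
    exact hne y hy (by simpa [hne w hw] using hy0)
  have hu' := ((hg u).hasDerivAt.mul_const (g w)).nonneg_of_eq_zero_of_nonneg_Ioo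
    (by simp [hu]) huv hsign
  have hv' := ((hg v).hasDerivAt.mul_const (g w)).nonpos_of_eq_zero_of_nonneg_Ioo
    (by simp [hv]) huv hsign
  nlinarith [mul_nonpos_of_nonneg_of_nonpos hu' hv', sq_pos_of_ne_zero (hne w hw)]

theorem AnalyticOnNhd.finite_inter_zeros_of_isCompact {g : ℝ → ℝ}
    (hg : AnalyticOnNhd ℝ g univ) (hg0 : g ≠ 0) {K : Set ℝ} (hK : IsCompact K) :
    (K ∩ {x | g x = 0}).Finite := by
  by_contra hinf
  obtain ⟨z, -, hz⟩ := Set.Infinite.exists_accPt_of_subset_isCompact hinf hK inter_subset_left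
  refine hg0 (hg.eq_of_frequently_eq (z₀ := z) analyticOnNhd_const ?_)
  exact (accPt_iff_frequently_nhdsNE.mp hz).mono fun x hx => hx.2

theorem AnalyticOnNhd.exists_last_zero_before {g : ℝ → ℝ} (hg : AnalyticOnNhd ℝ g univ)
    (hg0 : g ≠ 0) {u v : ℝ} (huv : u < v) (hu : g u = 0) :
    ∃ w ∈ Ico u v, g w = 0 ∧ ∀ x ∈ Ioo w v, g x ≠ 0 := by
  have hfin : (Ico u v ∩ {x | g x = 0}).Finite :=
    (hg.finite_inter_zeros_of_isCompact hg0 isCompact_Icc).subset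
      (inter_subset_inter_left _ Ico_subset_Icc_self)
  obtain ⟨w, ⟨hw, hgw⟩, hmax⟩ := hfin.exists_maximal ⟨u, ⟨le_rfl, huv⟩, hu⟩
  refine ⟨w, hw, hgw, fun x hx hgx => ?_⟩
  have := hmax ⟨⟨hw.1.trans hx.1.le, hx.2⟩, hgx⟩ hx.1.le
  linarith [hx.1]

theorem AnalyticOnNhd.exists_zero_Icc_of_eq_mul_deriv {g e β : ℝ → ℝ}
    (hg : AnalyticOnNhd ℝ g univ) (hg0 : g ≠ 0) (he : ∀ x, 0 ≤ e x) (hβ : Continuous β)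
    (hrel : ∀ x, g x = 0 → β x = e x * deriv g x) {u v : ℝ} (huv : u < v) (hu : g u = 0)
    (hv : g v = 0) : ∃ c ∈ Icc u v, β c = 0 := by
  obtain ⟨w, hw, hgw, hne⟩ := hg.exists_last_zero_before hg0 huv hu
  have hsign : deriv g w * deriv g v ≤ 0 :=
    deriv_mul_deriv_nonpos_of_consecutive_zeros (fun x => (hg x trivial).differentiableAt)
      hw.2 hgw hv hne
  have hβwv : β w * β v ≤ 0 := by
    rw [hrel w hgw, hrel v hv]
    nlinarith [mul_nonneg (he w) (he v)]
  have h0 : (0 : ℝ) ∈ uIcc (β w) (β v) := by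
    rcases mul_nonpos_iff.mp hβwv with h | h
    · exact mem_uIcc.mpr (Or.inr ⟨h.2, h.1⟩)
    · exact mem_uIcc.mpr (Or.inl ⟨h.1, h.2⟩)
  obtain ⟨c, hc, hβc⟩ := intermediate_value_uIcc hβ.continuousOn h0
  rw [uIcc_of_le hw.2.le] at hc
  exact ⟨c, ⟨hw.1.trans hc.1, hc.2⟩, hβc⟩

theorem Set.Infinite.of_forall_exists_mem_Icc {α : Type*} [LinearOrder α] {s t : Set α}
    (hs : s.Infinite) (h : ∀ u ∈ s, ∀ v ∈ s, u < v → ∃ c ∈ Icc u v, c ∈ t) : t.Infinite := by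
  intro ht
  -- pigeonhole on the sets `t ∩ Iio x` for `x ∈ s \ t`
  obtain ⟨u, hu, v, hv, huv, heq⟩ := (hs.sdiff ht).exists_ne_map_eq_of_mapsTo
    (f := fun x => t ∩ Iio x) (fun _ _ => inter_subset_left) ht.finite_subsets
  wlog hlt : u < v generalizing u v
  · exact this v hv u hu huv.symm heq.symm (lt_of_le_of_ne (not_lt.mp hlt) huv.symm)
  obtain ⟨c, ⟨hcu, hcv⟩, hct⟩ := h u hu.1 v hv.1 hlt
  have hcv' : c < v := lt_of_le_of_ne hcv fun hcv => hv.2 (hcv ▸ hct)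
  have hcu' : c ∈ t ∩ Iio u := heq ▸ ⟨hct, hcv'⟩
  exact absurd hcu (not_le.mpr hcu'.2)

theorem AnalyticOnNhd.infinite_zeros_of_mul_deriv_eq {g c β : ℝ → ℝ}
    (hg : AnalyticOnNhd ℝ g univ) (hg0 : g ≠ 0) (hginf : {x | g x = 0}.Infinite)
    (hc : Continuous c) (hcfin : {x | c x = 0}.Finite) (hβ : Continuous β)
    (hrel : ∀ x, g x = 0 → c x * deriv g x = β x) : {x | β x = 0}.Infinite := by
  have hcβ : {x | c x * β x = 0}.Infinite :=
    hginf.of_forall_exists_mem_Icc fun u hu v hv huv =>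
      hg.exists_zero_Icc_of_eq_mul_deriv hg0 (e := c ^ 2) (fun x => sq_nonneg (c x))
        (hc.mul hβ) (fun x hx => by rw [Pi.mul_apply, ← hrel x hx, Pi.pow_apply]; ring) huv hu hv
  exact (hcβ.sdiff hcfin).mono fun x hx => (mul_eq_zero.mp hx.1).resolve_left hx.2

theorem AnalyticOnNhd.eq_zero_of_mul_deriv_eq_mul {g c α : ℝ → ℝ}
    (hg : AnalyticOnNhd ℝ g univ) (hc : Continuous c) (hα : Continuous α)
    (h : ∀ x, c x * deriv g x = α x * g x) {x₀ : ℝ} (hgx₀ : g x₀ = 0) (hcx₀ : c x₀ ≠ 0) :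
    g = 0 := by
  set M := |α x₀ / c x₀| + 1
  have hnear : ∀ᶠ x in 𝓝 x₀, c x ≠ 0 ∧ |α x / c x| < M :=
    (hc.continuousAt.eventually_ne hcx₀).and <|
      (hα.continuousAt.div hc.continuousAt hcx₀).abs.eventually_lt_const (lt_add_one _)
  obtain ⟨b, hx₀b, hb⟩ := exists_Ico_subset_of_mem_nhds hnear (exists_gt x₀)
  -- Grönwall: `|g'| ≤ M |g|` on `[x₀, b)` and `g x₀ = 0`
  have hzero : ∀ x ∈ Icc x₀ b, g x = 0 := by
    refine eq_zero_of_abs_deriv_le_mul_abs_self_of_eq_zero_right (K := M)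
      (fun x _ => (hg x trivial).continuousAt.continuousWithinAt)
      (fun x _ => (hg x trivial).differentiableAt.hasDerivAt.hasDerivWithinAt) hgx₀ ?_
    intro x hx
    obtain ⟨hcx, hM⟩ := hb hx
    have hderiv : deriv g x = α x / c x * g x := by
      rw [div_mul_eq_mul_div, eq_div_iff hcx, mul_comm, h]
    rw [hderiv, norm_mul]
    exact mul_le_mul_of_nonneg_right hM.le (norm_nonneg _)
  have hright : ∀ᶠ x in 𝓝[>] x₀, g x = (0 : ℝ → ℝ) x := by
    filter_upwards [Ioo_mem_nhdsGT hx₀b] with x hx using hzero x (Ioo_subset_Icc_self hx)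
  exact hg.eq_of_frequently_eq analyticOnNhd_const
    (hright.frequently.filter_mono (nhdsGT_le_nhdsNE x₀))

theorem Polynomial.degree_C_leadingCoeff_mul_sub_lt {R : Type*} [CommRing R] {p q : R[X]}
    (hpq : p.natDegree ≤ q.natDegree) :
    (C p.leadingCoeff * q - C q.leadingCoeff * X ^ (q.natDegree - p.natDegree) * p).degree
      < (q.natDegree : WithBot ℕ) := by
  rw [degree_lt_iff_coeff_zero]
  intro m hm
  have hm : q.natDegree ≤ m := by exact_mod_cast hm
  have hcoeff : (C q.leadingCoeff * X ^ (q.natDegree - p.natDegree) * p).coeff m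
      = q.leadingCoeff * p.coeff (m - (q.natDegree - p.natDegree)) := by
    rw [mul_assoc, coeff_C_mul, coeff_X_pow_mul', if_pos (by omega)]
  rw [coeff_sub, coeff_C_mul, hcoeff]
  rcases hm.eq_or_lt with rfl | hlt
  · rw [show q.natDegree - (q.natDegree - p.natDegree) = p.natDegree by omega,
      coeff_natDegree, coeff_natDegree, mul_comm]
    exact sub_self _
  · rw [coeff_eq_zero_of_natDegree_lt hlt, coeff_eq_zero_of_natDegree_lt (by omega),
      mul_zero, mul_zero, sub_zero]

/-- Pseudo-division. -/
theorem Polynomial.exists_C_leadingCoeff_pow_mul_eq_mul_add {R : Type*} [CommRing R]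
    {p : R[X]} (hp : p ≠ 0) (q : R[X]) :
    ∃ (k : ℕ) (A B : R[X]), C p.leadingCoeff ^ k * q = A * p + B ∧ B.degree < p.degree := by
  induction hn : q.natDegree using Nat.strong_induction_on generalizing q with
  | _ n ih =>
  by_cases hlt : q.degree < p.degree
  · exact ⟨0, 0, q, by simp, hlt⟩
  have hpq : p.natDegree ≤ q.natDegree := natDegree_le_natDegree (not_lt.mp hlt)
  set q' := C p.leadingCoeff * q - C q.leadingCoeff * X ^ (q.natDegree - p.natDegree) * p
  obtain ⟨k, A, B, hAB, hB⟩ : ∃ (k : ℕ) (A B : R[X]), C p.leadingCoeff ^ k * q' = A * p + B ∧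
      B.degree < p.degree := by
    by_cases hq'p : q'.degree < p.degree
    · exact ⟨0, 0, q', by simp, hq'p⟩
    have hq'0 : q' ≠ 0 := fun h => hq'p (by
      rw [h, degree_zero, bot_lt_iff_ne_bot, Ne, degree_eq_bot]; exact hp)
    refine ih _ (hn ▸ ?_) q' rfl
    exact (natDegree_lt_iff_degree_lt hq'0).mpr (degree_C_leadingCoeff_mul_sub_lt hpq)
  refine ⟨k + 1, A + C p.leadingCoeff ^ k * C q.leadingCoeff * X ^ (q.natDegree - p.natDegree),
    B, ?_, hB⟩
  linear_combination hAB

theorem Subalgebra.eval_cons_mem {S : Subalgebra ℝ (ℝ → ℝ)} (hid : id ∈ S) {n : ℕ}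
    {G : Fin n → ℝ → ℝ} (hG : ∀ j, G j ∈ S) (P : MvPolynomial (Fin (n + 1)) ℝ) :
    (fun x => MvPolynomial.eval (Fin.cons x fun j => G j x) P) ∈ S := by
  have hmem : ∀ i, (Fin.cons id G : Fin (n + 1) → ℝ → ℝ) i ∈ S := Fin.cases hid hG
  convert (MvPolynomial.aeval fun i => (⟨_, hmem i⟩ : S)) P |>.prop using 1
  funext x
  have hx := MvPolynomial.comp_aeval_apply (f := fun i => (⟨_, hmem i⟩ : S))
    ((Pi.evalAlgHom ℝ (fun _ => ℝ) x).comp S.val) P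
  simp only [AlgHom.comp_apply, Subalgebra.coe_val, Pi.evalAlgHom_apply] at hx
  rw [hx]
  exact congrArg (MvPolynomial.eval · P) (funext fun i => by cases i using Fin.cases <;> rfl)

structure IsKhovanskii (S : Subalgebra ℝ (ℝ → ℝ)) : Prop where
  analyticOnNhd : ∀ g ∈ S, AnalyticOnNhd ℝ g univ
  deriv_mem : ∀ g ∈ S, deriv g ∈ S
  finite_zeros : ∀ g ∈ S, g ≠ 0 → {x | g x = 0}.Finite

theorem isKhovanskii_bot : IsKhovanskii ⊥ := by
  refine ⟨?_, ?_, ?_⟩ <;> intro g hg <;> obtain ⟨c, rfl⟩ := Algebra.mem_bot.mp hg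
  · exact analyticOnNhd_const
  · rw [Pi.algebraMap_def, deriv_const']
    exact zero_mem _
  · intro hc
    have : c ≠ 0 := by rintro rfl; exact hc (by simp)
    simp [this]

namespace IsKhovanskii

variable {S : Subalgebra ℝ (ℝ → ℝ)} {φ : ℝ → ℝ}

theorem continuous (hS : IsKhovanskii S) {g : ℝ → ℝ} (hg : g ∈ S) : Continuous g :=
  continuousOn_univ.mp (hS.analyticOnNhd g hg).continuousOn

theorem analyticOnNhd_of_mem_adjoin (hS : IsKhovanskii S) (hφ : AnalyticOnNhd ℝ φ univ)
    {g : ℝ → ℝ} (hg : g ∈ Algebra.adjoin S {φ}) : AnalyticOnNhd ℝ g univ := by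
  induction hg using Algebra.adjoin_induction with
  | mem _ h => rwa [mem_singleton_iff.mp h]
  | algebraMap s => exact hS.analyticOnNhd s s.2
  | add _ _ _ _ h₁ h₂ => exact h₁.add h₂
  | mul _ _ _ _ h₁ h₂ => exact h₁.mul h₂

theorem deriv_mem_adjoin (hS : IsKhovanskii S) (hφ : AnalyticOnNhd ℝ φ univ)
    (hφ' : deriv φ ∈ Algebra.adjoin S {φ}) {g : ℝ → ℝ} (hg : g ∈ Algebra.adjoin S {φ}) :
    deriv g ∈ Algebra.adjoin S {φ} := by
  have hd : ∀ {g}, g ∈ Algebra.adjoin S {φ} → Differentiable ℝ g := fun hg x =>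
    (hS.analyticOnNhd_of_mem_adjoin hφ hg x trivial).differentiableAt
  induction hg using Algebra.adjoin_induction with
  | mem _ h => rwa [mem_singleton_iff.mp h]
  | algebraMap s => exact Subalgebra.algebraMap_mem _ (⟨deriv s, hS.deriv_mem s s.2⟩ : S)
  | add g h hg hh ihg ihh =>
    rw [show deriv (g + h) = deriv g + deriv h from funext fun x => deriv_add (hd hg x) (hd hh x)]
    exact add_mem ihg ihh
  | mul g h hg hh ihg ihh =>
    rw [show deriv (g * h) = deriv g * h + g * deriv h from
      funext fun x => deriv_mul (hd hg x) (hd hh x)]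
    exact add_mem (mul_mem ihg hh) (mul_mem hg ihh)

theorem finite_zeros_aeval (hS : IsKhovanskii S) (hφ : AnalyticOnNhd ℝ φ univ)
    (hφ' : deriv φ ∈ Algebra.adjoin S {φ}) (p : S[X]) (hp : aeval φ p ≠ 0) :
    {x | aeval φ p x = 0}.Finite := by
  induction hn : p.natDegree using Nat.strong_induction_on generalizing p with
  | _ n ih =>
  have hanalytic : ∀ q : S[X], AnalyticOnNhd ℝ (aeval φ q) univ := fun q =>
    hS.analyticOnNhd_of_mem_adjoin hφ (aeval_mem_adjoin_singleton S φ)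
  have hcont : ∀ q : S[X], Continuous (aeval φ q) := fun q =>
    continuousOn_univ.mp (hanalytic q).continuousOn
  have hp0 : p ≠ 0 := by rintro rfl; exact hp (map_zero _)
  obtain ⟨R, hR⟩ : ∃ R : S[X], aeval φ R = deriv (aeval φ p) := by
    rw [← AlgHom.mem_range, ← Algebra.adjoin_singleton_eq_range_aeval]
    exact hS.deriv_mem_adjoin hφ hφ' (aeval_mem_adjoin_singleton S φ)
  obtain ⟨k, A, B, hdiv, hB⟩ := exists_C_leadingCoeff_pow_mul_eq_mul_add hp0 R
  set a : S := p.leadingCoeff ^ k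
  have hafin : {x | (a : ℝ → ℝ) x = 0}.Finite := by
    refine (hS.finite_zeros _ p.leadingCoeff.2 fun h => ?_).subset fun x hx => ?_
    · exact leadingCoeff_ne_zero.mpr hp0 (Subtype.ext h)
    · exact (pow_eq_zero_iff'.mp (by simpa [a] using hx)).1
  have hrel : ∀ x,
      (a : ℝ → ℝ) x * deriv (aeval φ p) x = aeval φ A x * aeval φ p x + aeval φ B x := by
    have := congrArg (aeval φ) hdiv
    simp only [map_mul, map_add, map_pow, aeval_C, hR] at this
    exact congrFun this
  by_contra hinf
  have hB0 : aeval φ B = 0 := by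
    by_contra hB0
    have hBp : B.natDegree < n :=
      hn ▸ (natDegree_lt_iff_degree_lt fun h => hB0 (by rw [h, map_zero])).mpr
        (hB.trans_le degree_le_natDegree)
    refine (hanalytic p).infinite_zeros_of_mul_deriv_eq hp hinf (hS.continuous a.2) hafin
      (hcont B) (fun x hx => ?_) (ih _ hBp B hB0 rfl)
    rw [hrel, hx, mul_zero, zero_add]
  obtain ⟨x₀, hgx₀, hax₀⟩ := (Set.Infinite.sdiff hinf hafin).nonempty
  refine hp ((hanalytic p).eq_zero_of_mul_deriv_eq_mul (hS.continuous a.2) (hcont A)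
    (fun x => ?_) hgx₀ hax₀)
  rw [hrel, hB0, Pi.zero_apply, add_zero]

theorem adjoin (hS : IsKhovanskii S) (hφ : AnalyticOnNhd ℝ φ univ)
    (hφ' : deriv φ ∈ Algebra.adjoin S {φ}) :
    IsKhovanskii ((Algebra.adjoin S {φ}).restrictScalars ℝ) where
  analyticOnNhd _ hg := hS.analyticOnNhd_of_mem_adjoin hφ hg
  deriv_mem _ hg := hS.deriv_mem_adjoin hφ hφ' hg
  finite_zeros g hg hg0 := by
    rw [Subalgebra.mem_restrictScalars, Algebra.adjoin_singleton_eq_range_aeval] at hg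
    obtain ⟨p, rfl⟩ := hg
    exact hS.finite_zeros_aeval hφ hφ' p hg0

end IsKhovanskii

theorem IsPfaffianChain.exists_isKhovanskii {r : ℕ} {f : Fin r → ℝ → ℝ}
    (hf : IsPfaffianChain f) : ∃ S, IsKhovanskii S ∧ id ∈ S ∧ ∀ i, f i ∈ S := by
  induction r with
  | zero =>
    have hid : deriv (id : ℝ → ℝ) ∈ Algebra.adjoin (⊥ : Subalgebra ℝ (ℝ → ℝ)) {id} := by
      rw [show deriv (id : ℝ → ℝ) = 1 from funext deriv_id]
      exact one_mem _
    refine ⟨(Algebra.adjoin (⊥ : Subalgebra ℝ (ℝ → ℝ)) {id}).restrictScalars ℝ,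
      isKhovanskii_bot.adjoin analyticOnNhd_id hid, ?_, fun i => i.elim0⟩
    exact (Subalgebra.mem_restrictScalars ℝ).mpr (Algebra.self_mem_adjoin_singleton _ _)
  | succ r ih =>
    obtain ⟨S, hS, hid, hfS⟩ :=
      ih (f := fun i => f i.castSucc) ⟨fun i => hf.1 i.castSucc, fun i => hf.2 i.castSucc⟩
    set φ := f (Fin.last r)
    set T := (Algebra.adjoin S {φ}).restrictScalars ℝ
    have hST : S ≤ T := fun g hg => Subalgebra.algebraMap_mem _ (⟨g, hg⟩ : S)
    have hφT : φ ∈ T :=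
      (Subalgebra.mem_restrictScalars ℝ).mpr (Algebra.self_mem_adjoin_singleton _ _)
    have hfT : ∀ i, f i ∈ T := Fin.lastCases hφT fun i => hST (hfS i)
    obtain ⟨P, hP⟩ := hf.2 (Fin.last r)
    have hφ' : deriv φ ∈ T := by
      rw [show deriv φ = _ from funext hP]
      exact T.eval_cons_mem (hST hid) (fun _ => hfT _) P
    exact ⟨T, hS.adjoin (fun x _ => hf.1 _ x) hφ', hST hid, hfT⟩

theorem IsPfaffian.exists_isKhovanskii {g : ℝ → ℝ} (hg : IsPfaffian g) :
    ∃ S, IsKhovanskii S ∧ g ∈ S := by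
  obtain ⟨r, f, hf, Q, hQ⟩ := hg
  obtain ⟨S, hS, hid, hfS⟩ := hf.exists_isKhovanskii
  exact ⟨S, hS, funext hQ ▸ S.eval_cons_mem hid hfS Q⟩

/-- A non-constant Pfaffian function `ℝ → ℝ` has finitely many zeroes. -/
theorem pfaffian_nonconstant_finite_zeros (f : ℝ → ℝ) (hf : IsPfaffian f)
    (hnc : ¬ ∃ c : ℝ, ∀ x : ℝ, f x = c) :
    {x : ℝ | f x = 0}.Finite := by
  obtain ⟨S, hS, hfS⟩ := hf.exists_isKhovanskii
  exact hS.finite_zeros f hfS fun h => hnc ⟨0, congrFun h⟩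
end

section
/- If f : ℝ → ℝ and g : ℝ → ℝ are Pfaffian functions, then their composition f ∘ g : ℝ → ℝ is a Pfaffian function. -/
open Set

section Adjoin

theorem comp_mem_of_mem_adjoin {R α β A : Type*} [CommSemiring R] [Semiring A] [Algebra R A]
    {S : Set (β → A)} {B : Subalgebra R (α → A)} {h : β → A} (hh : h ∈ Algebra.adjoin R S)
    (g : α → β) (hS : ∀ s ∈ S, s ∘ g ∈ B) : h ∘ g ∈ B := by
  let precomp : (β → A) →ₐ[R] (α → A) := AlgHom.pi fun x => Pi.evalAlgHom R (fun _ => A) (g x)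
  have himage : precomp '' S ⊆ B := by
    rintro _ ⟨s, hs, rfl⟩
    exact hS s hs
  exact Algebra.adjoin_le himage (by rw [← AlgHom.map_adjoin]; exact ⟨h, hh, rfl⟩)

variable {𝕜 : Type*} [NontriviallyNormedField 𝕜]

theorem analyticAt_of_mem_adjoin {E A : Type*} [NormedAddCommGroup E] [NormedSpace 𝕜 E]
    [NormedRing A] [NormedAlgebra 𝕜 A] {S : Set (E → A)} {x : E}
    (hS : ∀ s ∈ S, AnalyticAt 𝕜 s x) {h : E → A} (hh : h ∈ Algebra.adjoin 𝕜 S) :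
    AnalyticAt 𝕜 h x := by
  induction hh using Algebra.adjoin_induction with
  | mem s hs => exact hS s hs
  | algebraMap c => exact analyticAt_const
  | add f g _ _ hf hg => exact hf.add hg
  | mul f g _ _ hf hg => exact hf.mul hg

theorem differentiable_and_deriv_mem_adjoin {A : Type*} [NormedRing A] [NormedAlgebra 𝕜 A]
    {S : Set (𝕜 → A)} (hS : ∀ s ∈ S, Differentiable 𝕜 s ∧ deriv s ∈ Algebra.adjoin 𝕜 S)
    {h : 𝕜 → A} (hh : h ∈ Algebra.adjoin 𝕜 S) :
    Differentiable 𝕜 h ∧ deriv h ∈ Algebra.adjoin 𝕜 S := by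
  induction hh using Algebra.adjoin_induction with
  | mem s hs => exact hS s hs
  | algebraMap c =>
    change Differentiable 𝕜 (fun _ => algebraMap 𝕜 A c) ∧ deriv (fun _ => algebraMap 𝕜 A c) ∈ _
    exact ⟨differentiable_const _, by rw [deriv_const']; exact zero_mem _⟩
  | add f g _ _ hf hg =>
    refine ⟨hf.1.add hg.1, ?_⟩
    rw [show deriv (f + g) = deriv f + deriv g from funext fun x => deriv_add (hf.1 x) (hg.1 x)]
    exact add_mem hf.2 hg.2
  | mul f g hf₀ hg₀ hf hg =>
    refine ⟨hf.1.mul hg.1, ?_⟩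
    rw [show deriv (f * g) = deriv f * g + f * deriv g from
      funext fun x => deriv_mul (hf.1 x) (hg.1 x)]
    exact add_mem (mul_mem hf.2 hg₀) (mul_mem hf₀ hg.2)

end Adjoin

theorem mem_adjoin_insert_id_range_iff {R : Type*} [CommSemiring R] {n : ℕ} (F : Fin n → R → R)
    (h : R → R) :
    h ∈ Algebra.adjoin R (insert id (range F)) ↔
      ∃ P : MvPolynomial (Fin (n + 1)) R,
        ∀ x, h x = MvPolynomial.eval (Fin.cons x fun j => F j x) P := by
  rw [← Fin.range_cons, Algebra.adjoin_range_eq_range_aeval, AlgHom.mem_range]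
  refine exists_congr fun P => ?_
  have heval : ∀ x, MvPolynomial.aeval (Fin.cons id F) P x =
      MvPolynomial.eval (Fin.cons x fun j => F j x) P := by
    intro x
    change Pi.evalAlgHom R (fun _ => R) x (MvPolynomial.aeval _ P) = _
    rw [← AlgHom.comp_apply, MvPolynomial.comp_aeval, MvPolynomial.aeval_eq_eval]
    exact congrArg (MvPolynomial.eval · P) (funext fun i => Fin.cases rfl (fun _ => rfl) i)
  simp only [funext_iff, heval, eq_comm]

theorem range_comp_castLE_eq_image_Iic {r : ℕ} {α : Type*} (f : Fin r → α) (i : Fin r) :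
    range (fun j : Fin (i + 1) => f (Fin.castLE i.isLt j)) = f '' Iic i := by
  rw [← Function.comp_def, range_comp, Fin.range_castLE]
  congr 1
  ext j
  simp only [mem_ofPred_eq, mem_Iic, Fin.le_def]
  omega

theorem isPfaffianChain_iff {r : ℕ} (f : Fin r → ℝ → ℝ) :
    IsPfaffianChain f ↔ (∀ i x, AnalyticAt ℝ (f i) x) ∧
      ∀ i, deriv (f i) ∈ Algebra.adjoin ℝ (insert id (f '' Iic i)) := by
  refine and_congr_right fun _ => forall_congr' fun i => ?_
  rw [← range_comp_castLE_eq_image_Iic, mem_adjoin_insert_id_range_iff]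

theorem isPfaffian_iff (h : ℝ → ℝ) :
    IsPfaffian h ↔ ∃ (r : ℕ) (f : Fin r → ℝ → ℝ),
      IsPfaffianChain f ∧ h ∈ Algebra.adjoin ℝ (insert id (range f)) := by
  simp only [mem_adjoin_insert_id_range_iff]
  rfl

namespace IsPfaffianChain

variable {s : ℕ} {v : Fin s → ℝ → ℝ} {g : ℝ → ℝ}

theorem analyticAt_of_mem_adjoin (hv : IsPfaffianChain v)
    (hg : g ∈ Algebra.adjoin ℝ (insert id (range v))) (x : ℝ) : AnalyticAt ℝ g x := by
  refine _root_.analyticAt_of_mem_adjoin ?_ hg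
  rintro _ (rfl | ⟨i, rfl⟩)
  exacts [analyticAt_id, hv.1 i x]

theorem differentiable_and_deriv_mem_adjoin (hv : IsPfaffianChain v)
    (hg : g ∈ Algebra.adjoin ℝ (insert id (range v))) :
    Differentiable ℝ g ∧ deriv g ∈ Algebra.adjoin ℝ (insert id (range v)) := by
  rw [isPfaffianChain_iff] at hv
  refine _root_.differentiable_and_deriv_mem_adjoin ?_ hg
  rintro _ (rfl | ⟨i, rfl⟩)
  · exact ⟨differentiable_id, by rw [deriv_id']; exact one_mem _⟩
  · exact ⟨fun x => (hv.1 i x).differentiableAt,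
      Algebra.adjoin_mono (insert_subset_insert (image_subset_range _ _)) (hv.2 i)⟩

theorem append_comp {r : ℕ} {u : Fin r → ℝ → ℝ} (hv : IsPfaffianChain v)
    (hu : IsPfaffianChain u) (hg : g ∈ Algebra.adjoin ℝ (insert id (range v))) :
    IsPfaffianChain (Fin.append v fun k => u k ∘ g) := by
  have hg_analytic := hv.analyticAt_of_mem_adjoin hg
  obtain ⟨hg_diff, hg_deriv⟩ := hv.differentiable_and_deriv_mem_adjoin hg
  rw [isPfaffianChain_iff] at hv hu ⊢
  refine ⟨fun i x => ?_, fun i => ?_⟩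
  · induction i using Fin.addCases with
    | left k => rw [Fin.append_left]; exact hv.1 k x
    | right k => rw [Fin.append_right]; exact (hu.1 k (g x)).comp (hg_analytic x)
  induction i using Fin.addCases with
  | left k =>
    rw [Fin.append_left]
    refine Algebra.adjoin_mono (insert_subset_insert ?_) (hv.2 k)
    rintro _ ⟨j, hj, rfl⟩
    exact ⟨Fin.castAdd r j, Fin.le_def.2 (Fin.le_def.1 hj), Fin.append_left _ _ _⟩
  | right k =>
    have hchain : deriv (u k ∘ g) = (deriv (u k) ∘ g) * deriv g :=
      funext fun x => deriv_comp x (hu.1 k (g x)).differentiableAt (hg_diff x)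
    rw [Fin.append_right, hchain]
    set w := Fin.append v fun k => u k ∘ g
    have hv_le : Algebra.adjoin ℝ (insert id (range v)) ≤
        Algebra.adjoin ℝ (insert id (w '' Iic (Fin.natAdd s k))) := by
      refine Algebra.adjoin_mono (insert_subset_insert ?_)
      rintro _ ⟨j, rfl⟩
      exact ⟨Fin.castAdd r j, Fin.le_def.2 (show (j : ℕ) ≤ s + k by omega), Fin.append_left _ _ _⟩
    refine mul_mem (comp_mem_of_mem_adjoin (hu.2 k) g ?_) (hv_le hg_deriv)
    rintro _ (rfl | ⟨j, hj, rfl⟩)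
    · exact hv_le hg
    · exact Algebra.subset_adjoin (mem_insert_of_mem _
        ⟨Fin.natAdd s j, (Fin.natAdd_le_natAdd_iff s).2 hj, Fin.append_right _ _ _⟩)

end IsPfaffianChain

/-- The set of Pfaffian functions is stable by composition. -/
theorem isPfaffian_comp (f g : ℝ → ℝ) (hf : IsPfaffian f) (hg : IsPfaffian g) :
    IsPfaffian (f ∘ g) := by
  obtain ⟨r, u, hu, hfu⟩ := (isPfaffian_iff f).1 hf
  obtain ⟨s, v, hv, hgv⟩ := (isPfaffian_iff g).1 hg
  refine (isPfaffian_iff _).2 ⟨s + r, _, hv.append_comp hu hgv, comp_mem_of_mem_adjoin hfu g ?_⟩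
  have hv_sub : range v ⊆ range (Fin.append v fun k => u k ∘ g) := by
    rintro _ ⟨j, rfl⟩
    exact ⟨Fin.castAdd r j, Fin.append_left _ _ _⟩
  rintro _ (rfl | ⟨k, rfl⟩)
  · exact Algebra.adjoin_mono (insert_subset_insert hv_sub) hgv
  · exact Algebra.subset_adjoin (mem_insert_of_mem _ ⟨Fin.natAdd s k, Fin.append_right _ _ _⟩)
end

section
/- The function g : ℝ → ℝ defined by g(x) = (sech²(x) + 3·sech²(3x)) / sech²(2x), where sech(t) = 1/cosh(t), attains a global minimum over ℝ at some point a with a ∈ (0.45, 0.46), and the minimum value α = g(a) satisfies α ∈ (3.14, 3.15). -/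
/-!
Substituting `u = cosh 2x ≥ 1` turns `g` into the rational function `gRat`, whose derivative
has the sign of `gRatCritPoly u = 2u⁴ + u³ - 6u² + 2u - 2`. This quartic is negative on
`[1, 1.4335]` and positive on `[1.444, ∞)`, so `gRat` falls and then rises on `[1, ∞)` and attains
its minimum there at some `u₀ ∈ [1.4335, 1.444]`, where `gRat > 3.14`; comparing with
`gRat 1.438 < 3.15` bounds the minimum from above. The minimizer of `g` is `a = arcosh u₀ / 2`,
and the Taylor bounds `cosh 0.9 < 1.4335 < 1.444 < cosh 0.92` put it in `(0.45, 0.46)`.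
-/

noncomputable def sech (t : ℝ) : ℝ := 1 / Real.cosh t

noncomputable def gFun (x : ℝ) : ℝ :=
  (sech x ^ 2 + 3 * sech (3 * x) ^ 2) / sech (2 * x) ^ 2

open Real Set

theorem exists_isMinOn_Ici_of_antitoneOn_of_monotoneOn {f : ℝ → ℝ} {l a b : ℝ} (hab : a ≤ b)
    (hf : ContinuousOn f (Icc a b)) (h_anti : AntitoneOn f (Icc l a))
    (h_mono : MonotoneOn f (Ici b)) : ∃ c ∈ Icc a b, IsMinOn f (Ici l) c := by
  obtain ⟨c, hc, hmin⟩ := isCompact_Icc.exists_isMinOn (nonempty_Icc.2 hab) hf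
  refine ⟨c, hc, fun x (hx : l ≤ x) => ?_⟩
  rcases le_or_gt x a with hxa | hax
  · exact (hmin (left_mem_Icc.2 hab)).trans (h_anti ⟨hx, hxa⟩ ⟨hx.trans hxa, le_rfl⟩ hxa)
  rcases le_or_gt b x with hbx | hxb
  · exact (hmin (right_mem_Icc.2 hab)).trans (h_mono self_mem_Ici hbx hbx)
  · exact hmin ⟨hax.le, hxb.le⟩

theorem abs_cosh_sub_taylor_le {x : ℝ} (hx : |x| ≤ 1) :
    |cosh x - (1 + x ^ 2 / 2 + x ^ 4 / 24 + x ^ 6 / 720)| ≤ |x| ^ 7 * (8 / (5040 * 7)) := by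
  have hpos := abs_le.1 (exp_bound hx (n := 7) (by norm_num))
  have hneg := abs_le.1 (exp_bound (x := -x) (by rwa [abs_neg]) (n := 7) (by norm_num))
  simp only [Finset.sum_range_succ, Finset.sum_range_zero, abs_neg, Nat.factorial] at hpos hneg
  rw [cosh_eq, abs_le]
  norm_num at hpos hneg ⊢
  constructor <;> linarith

theorem cosh_nine_tenths_lt : cosh 0.9 < 1.4335 := by
  have := (abs_le.1 (abs_cosh_sub_taylor_le (x := 0.9) (by norm_num [abs_of_pos]))).2
  norm_num [abs_of_pos] at this
  linarith

theorem lt_cosh_ninety_two_hundredths : 1.444 < cosh 0.92 := by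
  have := (abs_le.1 (abs_cosh_sub_taylor_le (x := 0.92) (by norm_num [abs_of_pos]))).1
  norm_num [abs_of_pos] at this
  linarith

theorem arcosh_div_two_mem_Ioo {u : ℝ} (hu : u ∈ Icc 1.4335 1.444) :
    arcosh u / 2 ∈ Ioo 0.45 0.46 := by
  have h_lo : arcosh (cosh 0.9) < arcosh u :=
    (arcosh_lt_arcosh (cosh_pos _) (by linarith [hu.1])).2 (cosh_nine_tenths_lt.trans_le hu.1)
  have h_hi : arcosh u < arcosh (cosh 0.92) :=
    (arcosh_lt_arcosh (by linarith [hu.1]) (cosh_pos _)).2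
      (hu.2.trans_lt lt_cosh_ninety_two_hundredths)
  rw [arcosh_cosh (by norm_num)] at h_lo h_hi
  constructor <;> linarith

noncomputable def gRat (u : ℝ) : ℝ := 8 * u ^ 2 * (u ^ 2 - u + 1) / ((u + 1) * (2 * u - 1) ^ 2)

theorem gFun_eq_gRat_cosh (x : ℝ) : gFun x = gRat (cosh (2 * x)) := by
  have h2 : cosh (2 * x) = 2 * cosh x ^ 2 - 1 := by
    rw [cosh_two_mul, sinh_sq]; ring
  have h1 : cosh x ^ 2 = (cosh (2 * x) + 1) / 2 := by linarith
  have h3 : cosh (3 * x) ^ 2 = (cosh (2 * x) + 1) / 2 * (2 * cosh (2 * x) - 1) ^ 2 := by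
    rw [cosh_three_mul, h2]; ring
  have h2u : 2 * cosh (2 * x) - 1 ≠ 0 := by linarith [one_le_cosh (2 * x)]
  have hc : cosh (2 * x) + 1 ≠ 0 := by linarith [one_le_cosh (2 * x)]
  simp only [gFun, gRat, sech, one_div, inv_pow, h3, h1]
  field_simp
  ring

def gRatCritPoly (u : ℝ) : ℝ := 2 * u ^ 4 + u ^ 3 - 6 * u ^ 2 + 2 * u - 2

theorem hasDerivAt_gRat {u : ℝ} (hu : 1 / 2 < u) :
    HasDerivAt gRat (8 * u * gRatCritPoly u / ((u + 1) ^ 2 * (2 * u - 1) ^ 3)) u := by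
  have h21 : 0 < 2 * u - 1 := by linarith
  have hnum : HasDerivAt (fun v : ℝ => 8 * v ^ 2 * (v ^ 2 - v + 1)) _ u :=
    ((hasDerivAt_pow 2 u).const_mul 8).mul (((hasDerivAt_pow 2 u).sub (hasDerivAt_id u)).add_const 1)
  have hden : HasDerivAt (fun v : ℝ => (v + 1) * (2 * v - 1) ^ 2) _ u :=
    ((hasDerivAt_id u).add_const 1).mul ((((hasDerivAt_id u).const_mul 2).sub_const 1).pow 2)
  have hquot : HasDerivAt gRat _ u := hnum.div hden (by positivity)
  convert hquot using 1
  rw [div_eq_div_iff (by positivity) (by positivity), gRatCritPoly, id_eq]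
  ring

theorem continuousOn_gRat : ContinuousOn gRat (Ioi (1 / 2)) :=
  fun _ hu => (hasDerivAt_gRat hu).continuousAt.continuousWithinAt

theorem gRatCritPoly_neg {u : ℝ} (hu : u ∈ Icc 1 1.4335) : gRatCritPoly u < 0 := by
  obtain ⟨h1, h2⟩ := hu
  unfold gRatCritPoly
  nlinarith [mul_nonneg (sub_nonneg.2 h1) (sub_nonneg.2 h2), sq_nonneg (u - 1)]

theorem gRatCritPoly_pos {u : ℝ} (hu : 1.444 ≤ u) : 0 < gRatCritPoly u := by
  unfold gRatCritPoly
  nlinarith [mul_nonneg (sub_nonneg.2 hu) (sq_nonneg u), sq_nonneg (u - 1.444)]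

theorem gRat_antitoneOn : AntitoneOn gRat (Icc 1 1.4335) := by
  have hsub : Icc (1 : ℝ) 1.4335 ⊆ Ioi (1 / 2) := fun u hu => by norm_num at hu ⊢; linarith [hu.1]
  refine antitoneOn_of_hasDerivWithinAt_nonpos (convex_Icc _ _) (continuousOn_gRat.mono hsub)
    (fun u hu => (hasDerivAt_gRat (hsub (interior_subset hu))).hasDerivWithinAt) fun u hu => ?_
  rw [interior_Icc] at hu
  have h21 : 0 < 2 * u - 1 := by linarith [hu.1]
  have hq := gRatCritPoly_neg (Ioo_subset_Icc_self hu)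
  exact div_nonpos_of_nonpos_of_nonneg (by nlinarith [hu.1]) (by positivity)

theorem gRat_monotoneOn : MonotoneOn gRat (Ici 1.444) := by
  have hsub : Ici (1.444 : ℝ) ⊆ Ioi (1 / 2) := fun u hu => by norm_num at hu ⊢; linarith
  refine monotoneOn_of_hasDerivWithinAt_nonneg (convex_Ici _) (continuousOn_gRat.mono hsub)
    (fun u hu => (hasDerivAt_gRat (hsub (interior_subset hu))).hasDerivWithinAt) fun u hu => ?_
  rw [interior_Ici] at hu
  have hu0 : 0 < u := by norm_num at hu; linarith
  have h21 : 0 < 2 * u - 1 := by norm_num at hu; linarith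
  have hq := gRatCritPoly_pos hu.le
  positivity

theorem three_fourteen_lt_gRat {u : ℝ} (hu : u ∈ Icc 1.4335 1.444) : 3.14 < gRat u := by
  obtain ⟨h1, h2⟩ := hu
  rw [gRat, lt_div_iff₀ (by nlinarith)]
  nlinarith [mul_nonneg (sub_nonneg.2 h1) (sub_nonneg.2 h2), sq_nonneg (u - 1.438)]

/-- `g` attains a global minimum over `ℝ` at some `a ∈ (0.45, 0.46)` with minimum
value `α = g(a) ∈ (3.14, 3.15)`. -/
theorem gFun_attains_global_min :
    ∃ a ∈ Set.Ioo (0.45 : ℝ) 0.46, ∃ α ∈ Set.Ioo (3.14 : ℝ) 3.15,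
      gFun a = α ∧ ∀ x : ℝ, α ≤ gFun x := by
  have hcont : ContinuousOn gRat (Icc 1.4335 1.444) :=
    continuousOn_gRat.mono fun u hu => by norm_num at hu ⊢; linarith [hu.1]
  obtain ⟨u₀, hu₀, hmin⟩ := exists_isMinOn_Ici_of_antitoneOn_of_monotoneOn (by norm_num) hcont
    gRat_antitoneOn gRat_monotoneOn
  have hu₀_one : 1 ≤ u₀ := by linarith [hu₀.1]
  have h_upper : gRat u₀ < 3.15 :=
    calc gRat u₀ ≤ gRat 1.438 := hmin (show (1.438 : ℝ) ∈ Ici 1 by norm_num)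
      _ < 3.15 := by norm_num [gRat]
  refine ⟨arcosh u₀ / 2, arcosh_div_two_mem_Ioo hu₀, gRat u₀,
    ⟨three_fourteen_lt_gRat hu₀, h_upper⟩, ?_, fun x => ?_⟩
  · rw [gFun_eq_gRat_cosh, mul_div_cancel₀ _ two_ne_zero, cosh_arcosh hu₀_one]
  · rw [gFun_eq_gRat_cosh]
    exact hmin (one_le_cosh _)
end
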